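/- arXiv:0809.4360 — 8 statements merged into one kernel-verified Lean document; each statement's English description precedes it below -/
import Mathlib

section
/- Let n be a positive integer and let c be an n×n complex matrix which is skew-Hermitian (star c = −c) and satisfies exp((2π)·c) = 1, where exp is the matrix exponential and 1 is the identity matrix. Then there exist a unitary n×n matrix a and integers s₁, …, sₙ such that (star a) * c * a is the diagonal matrix with diagonal entries i·s₁, …, i·sₙ. -/
/-!
Since `c` is skew-Hermitian, `I • c` is Hermitian, so a unitary `u` diagonalizes `c` as
`diag(I μ₁, …, I μₙ)` with `μₖ` real. Conjugating `exp (2π c) = 1` by `u` gives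
`exp (2π I μₖ) = 1` for every `k`, which forces each `μₖ` to be an integer.
-/

open Matrix Complex NormedSpace Real

theorem Matrix.exp_star_mul_mul_unitary {m 𝔸 : Type*} [Fintype m] [DecidableEq m]
    [NormedCommRing 𝔸] [NormedAlgebra ℚ 𝔸] [CompleteSpace 𝔸] [StarRing 𝔸] (u : unitaryGroup m 𝔸)
    (x : Matrix m m 𝔸) :
    exp (star (u : Matrix m m 𝔸) * x * u) = star (u : Matrix m m 𝔸) * exp x * u := by
  rw [← inv_eq_left_inv (Unitary.coe_star_mul_self u)]
  exact exp_conj' _ x Unitary.isUnit_coe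

theorem Matrix.exp_diagonal_eq_one_iff {m 𝔸 : Type*} [Fintype m] [DecidableEq m] [NormedRing 𝔸]
    [NormedAlgebra ℚ 𝔸] [CompleteSpace 𝔸] (v : m → 𝔸) :
    exp (diagonal v) = 1 ↔ ∀ i, exp (v i) = 1 := by
  rw [exp_diagonal, ← diagonal_one, diagonal_eq_diagonal_iff]
  simp

theorem Complex.exists_int_eq_of_exp_two_pi_I_mul_eq_one {x : ℝ}
    (h : exp (2 * π * I * x) = 1) : ∃ m : ℤ, x = m := by
  obtain ⟨m, hm⟩ := exp_eq_one_iff.mp h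
  refine ⟨m, ?_⟩
  have : (x : ℂ) = m := mul_left_cancel₀ two_pi_I_ne_zero (by linear_combination hm)
  exact_mod_cast this

theorem Matrix.exists_unitary_star_mul_mul_eq_diagonal_of_star_eq_neg {n : Type*} [Fintype n]
    [DecidableEq n] {c : Matrix n n ℂ} (hc : star c = -c) :
    ∃ u : unitaryGroup n ℂ, ∃ μ : n → ℝ,
      star (u : Matrix n n ℂ) * c * u = diagonal (fun k => I * μ k) := by
  have hH : (I • c).IsHermitian := by
    rw [IsHermitian, conjTranspose_smul, ← star_eq_conjTranspose, hc]
    simp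
  refine ⟨hH.eigenvectorUnitary, fun k => -hH.eigenvalues k, ?_⟩
  have hdiag := hH.conjStarAlgAut_star_eigenvectorUnitary
  rw [Unitary.conjStarAlgAut_apply, Unitary.coe_star, star_star, mul_smul_comm,
    smul_mul_assoc] at hdiag
  calc star (hH.eigenvectorUnitary : Matrix n n ℂ) * c * hH.eigenvectorUnitary
      = (-I) • I • (star (hH.eigenvectorUnitary : Matrix n n ℂ) * c * hH.eigenvectorUnitary) := by
        simp [smul_smul]
    _ = _ := by
        rw [hdiag, ← diagonal_smul]
        congr 1
        ext k
        simp

theorem stmt_0_general (n : ℕ) (c : Matrix (Fin n) (Fin n) ℂ)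
    (hskew : star c = -c)
    (hexp : NormedSpace.exp ((2 * Real.pi : ℝ) • c) = 1) :
    ∃ (a : Matrix (Fin n) (Fin n) ℂ) (s : Fin n → ℤ),
      star a * a = 1 ∧
      star a * c * a = Matrix.diagonal (fun k => Complex.I * (s k : ℂ)) := by
  obtain ⟨u, μ, hdiag⟩ := exists_unitary_star_mul_mul_eq_diagonal_of_star_eq_neg hskew
  have hexp_diag : exp ((2 * π : ℝ) • diagonal fun k => I * (μ k : ℂ)) = 1 := by
    rw [← hdiag, ← smul_mul_assoc, ← mul_smul_comm, exp_star_mul_mul_unitary, hexp, mul_one,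
      Unitary.coe_star_mul_self]
  rw [← diagonal_smul, exp_diagonal_eq_one_iff] at hexp_diag
  have hμ (k : Fin n) : ∃ m : ℤ, μ k = m := by
    apply exists_int_eq_of_exp_two_pi_I_mul_eq_one
    rw [exp_eq_exp_ℂ, ← hexp_diag k, Pi.smul_apply, Complex.real_smul]
    push_cast
    ring_nf
  choose s hs using hμ
  refine ⟨u, s, Unitary.coe_star_mul_self u, ?_⟩
  simp only [hdiag, hs, ofReal_intCast]

theorem stmt_0 (n : ℕ) (hn : 1 ≤ n) (c : Matrix (Fin n) (Fin n) ℂ)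
    (hskew : star c = -c)
    (hexp : NormedSpace.exp ((2 * Real.pi : ℝ) • c) = 1) :
    ∃ (a : Matrix (Fin n) (Fin n) ℂ) (s : Fin n → ℤ),
      star a * a = 1 ∧
      star a * c * a = Matrix.diagonal (fun k => Complex.I * (s k : ℂ)) :=
  stmt_0_general n c hskew hexp
end

section
/- Let n ≥ 1, let A : ℝ → Matrix n n ℂ be any function, and let f : ℝ → Matrix n n ℂ be differentiable with deriv f t = f t * A t − A t * f t for all t ∈ ℝ. Then for every natural number m and every t ∈ ℝ, trace((f t)^m) = trace((f 0)^m). -/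
attribute [local instance] Matrix.frobeniusNormedAddCommGroup Matrix.frobeniusNormedSpace

attribute [local instance] Matrix.frobeniusNormedRing Matrix.frobeniusNormedAlgebra

/-!
By the Leibniz rule, every power of a solution of the Lax equation `f' = [f, A]` satisfies
the same equation `(f ^ m)' = [f ^ m, A]`. The trace of a commutator vanishes,
so `trace (f ^ m)` has zero derivative and is constant.
-/

theorem HasDerivAt.pow_of_eq_commutator {𝕜 𝔸 : Type*} [NontriviallyNormedField 𝕜]
    [NormedRing 𝔸] [NormedAlgebra 𝕜 𝔸] {f : 𝕜 → 𝔸} {a : 𝔸} {t : 𝕜}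
    (hf : HasDerivAt f (f t * a - a * f t) t) (m : ℕ) :
    HasDerivAt (fun s => f s ^ m) (f t ^ m * a - a * f t ^ m) t := by
  induction m with
  | zero => simpa using hasDerivAt_const t (1 : 𝔸)
  | succ k ih =>
    have leibniz : (f t ^ k * a - a * f t ^ k) * f t + f t ^ k * (f t * a - a * f t)
        = f t ^ (k + 1) * a - a * f t ^ (k + 1) := by
      rw [pow_succ]; noncomm_ring
    simpa only [pow_succ, leibniz] using ih.fun_mul hf

theorem Matrix.trace_eq_of_hasDerivAt_eq_commutator {n 𝕜 : Type*} [Fintype n] [RCLike 𝕜]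
    {g A : ℝ → Matrix n n 𝕜} (hg : ∀ t, HasDerivAt g (g t * A t - A t * g t) t) (t s : ℝ) :
    (g t).trace = (g s).trace := by
  let trace : Matrix n n 𝕜 →L[ℝ] 𝕜 :=
    ((Matrix.traceLinearMap n 𝕜 𝕜).toContinuousLinearMap).restrictScalars ℝ
  have htrace : ∀ t, HasDerivAt (fun s => (g s).trace) 0 t := fun t => by
    have hcomm : trace (g t * A t - A t * g t) = 0 := by
      simp [trace, Matrix.trace_mul_comm (g t) (A t)]
    exact hcomm ▸ trace.hasFDerivAt.comp_hasDerivAt t (hg t)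
  exact is_const_of_deriv_eq_zero (fun t => (htrace t).differentiableAt)
    (fun t => (htrace t).deriv) t s

theorem stmt_4_general (n : ℕ) (A : ℝ → Matrix (Fin n) (Fin n) ℂ)
    (f : ℝ → Matrix (Fin n) (Fin n) ℂ) (hf : Differentiable ℝ f)
    (hode : ∀ t : ℝ, deriv f t = f t * A t - A t * f t) :
    ∀ (m : ℕ) (t : ℝ), ((f t) ^ m).trace = ((f 0) ^ m).trace := by
  intro m t
  have hlax : ∀ t, HasDerivAt f (f t * A t - A t * f t) t := fun t =>
    hode t ▸ (hf t).hasDerivAt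
  exact Matrix.trace_eq_of_hasDerivAt_eq_commutator (fun t => (hlax t).pow_of_eq_commutator m) t 0

theorem stmt_4 (n : ℕ) (hn : 1 ≤ n) (A : ℝ → Matrix (Fin n) (Fin n) ℂ)
    (f : ℝ → Matrix (Fin n) (Fin n) ℂ) (hf : Differentiable ℝ f)
    (hode : ∀ t : ℝ, deriv f t = f t * A t - A t * f t) :
    ∀ (m : ℕ) (t : ℝ), ((f t) ^ m).trace = ((f 0) ^ m).trace :=
  stmt_4_general n A f hf hode
end

section
/- Let n ≥ 1, let A : ℝ → Matrix n n ℂ be continuous, let f : ℝ → Matrix n n ℂ be differentiable with deriv f t = f t * A t − A t * f t for all t ∈ ℝ, and let ξ : ℝ → ℂⁿ be differentiable with deriv ξ t = −(A t).mulVec (ξ t) for all t ∈ ℝ. If λ ∈ ℂ satisfies (f 0).mulVec (ξ 0) = λ • ξ 0, then (f t).mulVec (ξ t) = λ • ξ t for all t ∈ ℝ. -/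
attribute [local instance] Matrix.frobeniusNormedAddCommGroup Matrix.frobeniusNormedSpace

/-!
Set `η t = f t ξ t - λ ξ t`. Since `f' = [f, A]` and `ξ' = -A ξ`, the product rule gives
`(f ξ)' = (f A - A f) ξ - f A ξ = -A (f ξ)`, so `η` solves the linear equation `η' = -A η`
with `η 0 = 0`. The coefficient `A` is continuous, hence bounded on compact intervals, so the
equation is Lipschitz there and uniqueness of solutions forces `η = 0`.
-/

open Matrix Set

section MulVec

variable {m n 𝕜 : Type*} [Fintype m] [Fintype n] [RCLike 𝕜]

variable (m n 𝕜) in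
noncomputable def Matrix.mulVecBilinL : Matrix m n 𝕜 →L[ℝ] (n → 𝕜) →L[ℝ] (m → 𝕜) :=
  (mulVecBilin ℝ ℝ).toContinuousBilinearMap

@[simp]
theorem Matrix.mulVecBilinL_apply (M : Matrix m n 𝕜) (v : n → 𝕜) :
    mulVecBilinL m n 𝕜 M v = M *ᵥ v :=
  rfl

theorem HasDerivAt.matrix_mulVec {M : ℝ → Matrix m n 𝕜} {v : ℝ → n → 𝕜} {M' : Matrix m n 𝕜}
    {v' : n → 𝕜} {t : ℝ} (hM : HasDerivAt M M' t) (hv : HasDerivAt v v' t) :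
    HasDerivAt (fun s ↦ M s *ᵥ v s) (M t *ᵥ v' + M' *ᵥ v t) t :=
  (mulVecBilinL m n 𝕜).hasDerivAt_of_bilinear (fun _ ↦ hM) (fun _ ↦ hv)

/-- A covariantly constant endomorphism `f` (`f' = f A - A f`) maps parallel sections
(`ξ' = -A ξ`) to parallel sections. -/
theorem HasDerivAt.matrix_mulVec_of_commutator {f : ℝ → Matrix n n 𝕜} {ξ : ℝ → n → 𝕜}
    {A : Matrix n n 𝕜} {t : ℝ} (hf : HasDerivAt f (f t * A - A * f t) t)
    (hξ : HasDerivAt ξ (-(A *ᵥ ξ t)) t) :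
    HasDerivAt (fun s ↦ f s *ᵥ ξ s) (-(A *ᵥ (f t *ᵥ ξ t))) t :=
  (hf.matrix_mulVec hξ).congr_deriv <| by
    simp only [sub_mulVec, mulVec_neg, mulVec_mulVec]
    abel

end MulVec

theorem eq_zero_of_hasDerivAt_clm_apply {E : Type*} [NormedAddCommGroup E] [NormedSpace ℝ E]
    {B : ℝ → E →L[ℝ] E} (hB : Continuous B) {x : ℝ → E}
    (hx : ∀ t, HasDerivAt x (B t (x t)) t) {t₀ : ℝ} (h₀ : x t₀ = 0) : x = 0 := by
  funext t
  obtain ⟨a, b, ht, ht₀⟩ : ∃ a b, t ∈ Ioo a b ∧ t₀ ∈ Ioo a b :=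
    ⟨min t t₀ - 1, max t t₀ + 1, by grind, by grind⟩
  obtain ⟨K, hK⟩ := (isCompact_Icc.image_of_continuousOn hB.nnnorm.continuousOn).bddAbove
  have hlip (s : ℝ) (hs : s ∈ Ioo a b) : LipschitzOnWith K (B s) univ :=
    ((B s).lipschitz.weaken (hK ⟨s, Ioo_subset_Icc_self hs, rfl⟩)).lipschitzOnWith
  exact ODE_solution_unique_of_mem_Ioo hlip ht₀ (fun s _ ↦ ⟨hx s, trivial⟩)
    (fun s _ ↦ ⟨by simp, trivial⟩) h₀ ht

theorem stmt_5_general (n : ℕ) (A : ℝ → Matrix (Fin n) (Fin n) ℂ)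
    (hA : Continuous A)
    (f : ℝ → Matrix (Fin n) (Fin n) ℂ) (hf : Differentiable ℝ f)
    (hfode : ∀ t : ℝ, deriv f t = f t * A t - A t * f t)
    (ξ : ℝ → (Fin n → ℂ)) (hξ : Differentiable ℝ ξ)
    (hξode : ∀ t : ℝ, deriv ξ t = -((A t).mulVec (ξ t)))
    (lam : ℂ) (h0 : (f 0).mulVec (ξ 0) = lam • ξ 0) :
    ∀ t : ℝ, (f t).mulVec (ξ t) = lam • ξ t := by
  set η : ℝ → Fin n → ℂ := fun t ↦ f t *ᵥ ξ t - lam • ξ t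
  have hη (t : ℝ) : HasDerivAt η (-mulVecBilinL (Fin n) (Fin n) ℂ (A t) (η t)) t := by
    have hf' : HasDerivAt f (f t * A t - A t * f t) t := (hf t).hasDerivAt.congr_deriv (hfode t)
    have hξ' : HasDerivAt ξ (-(A t *ᵥ ξ t)) t := (hξ t).hasDerivAt.congr_deriv (hξode t)
    refine ((hf'.matrix_mulVec_of_commutator hξ').sub (hξ'.const_smul lam)).congr_deriv ?_
    simp only [η, mulVecBilinL_apply, mulVec_sub, mulVec_smul, smul_neg]
    abel
  have hη_eq_zero : η = 0 :=
    eq_zero_of_hasDerivAt_clm_apply ((mulVecBilinL _ _ _).continuous.comp hA).neg hη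
      (sub_eq_zero.2 h0)
  exact fun t ↦ sub_eq_zero.1 (congrFun hη_eq_zero t)

theorem stmt_5 (n : ℕ) (hn : 1 ≤ n) (A : ℝ → Matrix (Fin n) (Fin n) ℂ)
    (hA : Continuous A)
    (f : ℝ → Matrix (Fin n) (Fin n) ℂ) (hf : Differentiable ℝ f)
    (hfode : ∀ t : ℝ, deriv f t = f t * A t - A t * f t)
    (ξ : ℝ → (Fin n → ℂ)) (hξ : Differentiable ℝ ξ)
    (hξode : ∀ t : ℝ, deriv ξ t = -((A t).mulVec (ξ t)))
    (lam : ℂ) (h0 : (f 0).mulVec (ξ 0) = lam • ξ 0) :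
    ∀ t : ℝ, (f t).mulVec (ξ t) = lam • ξ t :=
  stmt_5_general n A hA f hf hfode ξ hξ hξode lam h0
end

section
/- Let U ⊆ ℂ be open and preconnected, let λ be a real number with λ² ≠ 1, and let f : ℂ → Matrix 2 2 ℂ be real-differentiable at every point of U with star (f z) = −(f z), trace (f z) = 0, and (f z) * (f z) = −(λ² : ℂ) • 1 for all z ∈ U. Write ∂₁f z := fderiv ℝ f z 1 and ∂ᵢf z := fderiv ℝ f z i for the derivatives in the directions 1 and i. If for all z ∈ U one has 2 • (∂ᵢf z) = ⁅∂₁f z, f z⁆ and 2 • (∂₁f z) = ⁅f z, ∂ᵢf z⁆, then f is constant on U, i.e. f z = f w for all z, w ∈ U. -/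
attribute [local instance] Matrix.frobeniusNormedAddCommGroup Matrix.frobeniusNormedSpace
attribute [local instance] Matrix.frobeniusNormedRing Matrix.frobeniusNormedAlgebra

open Complex

/-! Differentiating `f * f = -λ²` shows that `f z` anticommutes with both partial derivatives.
The system then reads `∂ᵢf = ∂₁f · f` and `∂₁f = -∂ᵢf · f`, so `∂ᵢf = -∂ᵢf · f² = λ² ∂ᵢf`;
as `λ² ≠ 1` both partial derivatives vanish, and `f` is constant on the connected open set `U`. -/

theorem eq_zero_of_anticommute_of_two_smul_eq_lie {𝕜 R : Type*} [Field 𝕜] [NeZero (2 : 𝕜)]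
    [Ring R] [Algebra 𝕜 R] {F a b : R} {c : 𝕜} (hc : c ≠ 1) (hF : F * F = -(c • 1))
    (ha : F * a + a * F = 0) (hb : F * b + b * F = 0)
    (hab : 2 • b = ⁅a, F⁆) (hba : 2 • a = ⁅F, b⁆) : a = 0 ∧ b = 0 := by
  have cancel_two : ∀ x y : R, 2 • x = 2 • y → x = y := fun x y h ↦ by
    rw [← ofNat_smul_eq_nsmul 𝕜, ← ofNat_smul_eq_nsmul 𝕜] at h
    exact smul_right_injective R two_ne_zero h
  have hb_eq : b = a * F := cancel_two _ _ <| by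
    rw [hab, Ring.lie_def, eq_neg_of_add_eq_zero_left ha, two_nsmul, sub_neg_eq_add]
  have ha_eq : a = -(b * F) := cancel_two _ _ <| by
    rw [hba, Ring.lie_def, eq_neg_of_add_eq_zero_left hb, two_nsmul]
    abel
  have hb_fix : b = c • b := by
    calc b = -(b * (F * F)) := by rw [← mul_assoc, ← neg_mul, ← ha_eq, ← hb_eq]
      _ = c • b := by rw [hF, mul_neg, mul_smul_comm, mul_one, neg_neg]
  have hb_zero : b = 0 := by
    have : (c - 1) • b = 0 := by rw [sub_smul, one_smul, ← hb_fix, sub_self]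
    exact (smul_eq_zero.mp this).resolve_left (sub_ne_zero.mpr hc)
  exact ⟨by rw [ha_eq, hb_zero, zero_mul, neg_zero], hb_zero⟩

theorem fderiv_anticommute_of_mul_self_eventually_eq {𝕜 E R : Type*}
    [NontriviallyNormedField 𝕜] [NormedAddCommGroup E] [NormedSpace 𝕜 E]
    [NormedRing R] [NormedAlgebra 𝕜 R] {f : E → R} {z : E} {c : R}
    (hf : DifferentiableAt 𝕜 f z) (hsq : ∀ᶠ w in nhds z, f w * f w = c) (v : E) :
    f z * fderiv 𝕜 f z v + fderiv 𝕜 f z v * f z = 0 := by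
  have hzero : HasFDerivAt (fun w ↦ f w * f w) (0 : E →L[𝕜] R) z :=
    (hasFDerivAt_const c z).congr_of_eventuallyEq hsq
  have := congrArg (· v) (hf.hasFDerivAt.mul' hf.hasFDerivAt |>.unique hzero)
  simpa using this

theorem Complex.continuousLinearMap_ext {E : Type*} [AddCommGroup E] [Module ℝ E]
    [TopologicalSpace E] {L M : ℂ →L[ℝ] E} (h1 : L 1 = M 1) (hI : L I = M I) : L = M := by
  ext v
  rw [← re_add_im v, ← mul_one (v.re : ℂ), ← real_smul, ← real_smul, map_add, map_add,
    map_smul, map_smul, map_smul, map_smul, h1, hI]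

theorem stmt_6_general (U : Set ℂ) (hU : IsOpen U) (hUconn : IsPreconnected U)
    (lam : ℝ) (hlam : lam ^ 2 ≠ 1)
    (f : ℂ → Matrix (Fin 2) (Fin 2) ℂ)
    (hdiff : ∀ z ∈ U, DifferentiableAt ℝ f z)
    (hsq : ∀ z ∈ U, f z * f z = -((lam ^ 2 : ℂ) • (1 : Matrix (Fin 2) (Fin 2) ℂ)))
    (heq : ∀ z ∈ U,
      2 • (fderiv ℝ f z Complex.I) = ⁅fderiv ℝ f z 1, f z⁆ ∧
      2 • (fderiv ℝ f z 1) = ⁅f z, fderiv ℝ f z Complex.I⁆) :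
    ∀ z ∈ U, ∀ w ∈ U, f z = f w := by
  have hc : (lam : ℂ) ^ 2 ≠ 1 := by exact_mod_cast hlam
  have hfderiv : U.EqOn (fderiv ℝ f) 0 := fun z hz ↦ by
    have hanti := fderiv_anticommute_of_mul_self_eventually_eq (hdiff z hz)
      (Filter.eventually_of_mem (hU.mem_nhds hz) hsq)
    obtain ⟨h1, hI⟩ := eq_zero_of_anticommute_of_two_smul_eq_lie hc (hsq z hz)
      (hanti 1) (hanti I) (heq z hz).1 (heq z hz).2
    exact Complex.continuousLinearMap_ext (h1.trans rfl) (hI.trans rfl)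
  intro z hz w hw
  exact hU.is_const_of_fderiv_eq_zero hUconn (fun x hx ↦ (hdiff x hx).differentiableWithinAt)
    hfderiv hz hw

theorem stmt_6 (U : Set ℂ) (hU : IsOpen U) (hUconn : IsPreconnected U)
    (lam : ℝ) (hlam : lam ^ 2 ≠ 1)
    (f : ℂ → Matrix (Fin 2) (Fin 2) ℂ)
    (hdiff : ∀ z ∈ U, DifferentiableAt ℝ f z)
    (hskew : ∀ z ∈ U, star (f z) = -f z)
    (htr : ∀ z ∈ U, (f z).trace = 0)
    (hsq : ∀ z ∈ U, f z * f z = -((lam ^ 2 : ℂ) • (1 : Matrix (Fin 2) (Fin 2) ℂ)))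
    (heq : ∀ z ∈ U,
      2 • (fderiv ℝ f z Complex.I) = ⁅fderiv ℝ f z 1, f z⁆ ∧
      2 • (fderiv ℝ f z 1) = ⁅f z, fderiv ℝ f z Complex.I⁆) :
    ∀ z ∈ U, ∀ w ∈ U, f z = f w :=
  stmt_6_general U hU hUconn lam hlam f hdiff hsq heq
end

section
/- Let U ⊆ ℂ be open and let f : ℂ → Matrix 2 2 ℂ be real-differentiable at every point of U with star (f z) = −(f z), trace (f z) = 0, and (f z) * (f z) = −1 for all z ∈ U. Write ∂₁f z := fderiv ℝ f z 1 and ∂ᵢf z := fderiv ℝ f z i. Then for every z ∈ U the following are equivalent: (a) 2 • (∂ᵢf z) = ⁅∂₁f z, f z⁆ and 2 • (∂₁f z) = ⁅f z, ∂ᵢf z⁆; (b) ∂ᵢf z = (∂₁f z) * (f z). -/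
/-!
Differentiating `f * f = -1` shows that every directional derivative of `f` anticommutes with `f`.
For `A` anticommuting with `F` one has `⁅A, F⁆ = 2 • (A * F)` and, using `F * F = -1`,
`⁅F, A * F⁆ = 2 • A`; so the first equation of (a) already says `∂ᵢf = ∂₁f * f`, and that in turn
implies the second one.
-/

attribute [local instance] Matrix.frobeniusNormedAddCommGroup Matrix.frobeniusNormedSpace
attribute [local instance] Matrix.frobeniusNormedRing Matrix.frobeniusNormedAlgebra

section Anticommute

variable {R : Type*} [Ring R] {A B F : R}

theorem lie_eq_two_nsmul_mul_of_mul_eq_neg (hA : F * A = -(A * F)) :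
    ⁅A, F⁆ = 2 • (A * F) := by
  rw [Ring.lie_def, hA, sub_neg_eq_add, two_nsmul]

theorem lie_mul_eq_two_nsmul_of_mul_eq_neg (hF : F * F = -1) (hA : F * A = -(A * F)) :
    ⁅F, A * F⁆ = 2 • A := by
  rw [Ring.lie_def, ← mul_assoc, hA, neg_mul, mul_assoc, hF, two_nsmul]
  noncomm_ring

theorem two_nsmul_eq_lie_and_iff_eq_mul [IsAddTorsionFree R] (hF : F * F = -1) (hA : F * A = -(A * F)) :
    (2 • B = ⁅A, F⁆ ∧ 2 • A = ⁅F, B⁆) ↔ B = A * F := by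
  rw [lie_eq_two_nsmul_mul_of_mul_eq_neg hA, (nsmul_right_injective two_ne_zero).eq_iff]
  constructor
  · exact And.left
  · rintro rfl
    exact ⟨rfl, (lie_mul_eq_two_nsmul_of_mul_eq_neg hF hA).symm⟩

end Anticommute

theorem mul_fderiv_add_fderiv_mul_eq_zero {𝕜 E 𝔸 : Type*} [NontriviallyNormedField 𝕜]
    [NormedAddCommGroup E] [NormedSpace 𝕜 E] [NormedRing 𝔸] [NormedAlgebra 𝕜 𝔸]
    {f : E → 𝔸} {z : E} {c : 𝔸} (hf : DifferentiableAt 𝕜 f z)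
    (hsq : (fun w => f w * f w) =ᶠ[nhds z] fun _ => c) (v : E) :
    f z * fderiv 𝕜 f z v + fderiv 𝕜 f z v * f z = 0 := by
  have hprod := hf.hasFDerivAt.mul' hf.hasFDerivAt
  have hconst : HasFDerivAt (f * f) (0 : E →L[𝕜] 𝔸) z :=
    (hasFDerivAt_const c z).congr_of_eventuallyEq hsq
  exact congrArg (fun L : E →L[𝕜] 𝔸 => L v) (hprod.unique hconst)

theorem stmt_7_general (U : Set ℂ) (hU : IsOpen U)
    (f : ℂ → Matrix (Fin 2) (Fin 2) ℂ)
    (hdiff : ∀ z ∈ U, DifferentiableAt ℝ f z)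
    (hsq : ∀ z ∈ U, f z * f z = -1) :
    ∀ z ∈ U,
      ((2 • (fderiv ℝ f z Complex.I) = ⁅fderiv ℝ f z 1, f z⁆ ∧
        2 • (fderiv ℝ f z 1) = ⁅f z, fderiv ℝ f z Complex.I⁆) ↔
      fderiv ℝ f z Complex.I = (fderiv ℝ f z 1) * f z) := by
  intro z hz
  have : IsAddTorsionFree (Matrix (Fin 2) (Fin 2) ℂ) := IsAddTorsionFree.of_module_nnrat _
  have hsq_near : (fun w => f w * f w) =ᶠ[nhds z] fun _ => -1 :=
    Filter.eventually_of_mem (hU.mem_nhds hz) hsq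
  have hanti := mul_fderiv_add_fderiv_mul_eq_zero (hdiff z hz) hsq_near 1
  exact two_nsmul_eq_lie_and_iff_eq_mul (hsq z hz) (eq_neg_of_add_eq_zero_left hanti)

theorem stmt_7 (U : Set ℂ) (hU : IsOpen U)
    (f : ℂ → Matrix (Fin 2) (Fin 2) ℂ)
    (hdiff : ∀ z ∈ U, DifferentiableAt ℝ f z)
    (hskew : ∀ z ∈ U, star (f z) = -f z)
    (htr : ∀ z ∈ U, (f z).trace = 0)
    (hsq : ∀ z ∈ U, f z * f z = -1) :
    ∀ z ∈ U,
      ((2 • (fderiv ℝ f z Complex.I) = ⁅fderiv ℝ f z 1, f z⁆ ∧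
        2 • (fderiv ℝ f z 1) = ⁅f z, fderiv ℝ f z Complex.I⁆) ↔
      fderiv ℝ f z Complex.I = (fderiv ℝ f z 1) * f z) :=
  stmt_7_general U hU f hdiff hsq
end

section
/- Let n ≥ 1 and let a, b, c be n×n complex matrices with (star b) * a = 0 and (star b) * c = 0. Define u : ℝ → Matrix n n ℂ by u θ = exp(−iθ) • a + b + exp(iθ) • c and suppose (star (u θ)) * (u θ) = 1 for all θ ∈ ℝ. Then for all θ ∈ ℝ, (star (u θ)) * ((−i·exp(−iθ)) • a + (i·exp(iθ)) • c) = i • ((star c) * c − (star a) * a); in particular u(θ)* · u′(θ) is independent of θ, where u′(θ) = −i e^{−iθ} a + i e^{iθ} c is the derivative of u. -/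
/-!
Since `b` is orthogonal to `a` and `c`, the unitarity relation `u* u = 1` becomes
`a*a + b*b + c*c + e^{2iθ} a*c + e^{-2iθ} c*a = 1`; a trigonometric polynomial that vanishes
identically has vanishing coefficients, so `a*c = c*a = 0`. With all these cross terms gone,
`u* u'` collapses to `i (c*c - a*a)`.
-/

open Complex
open scoped Real

section UnitCircle

variable {A : Type*} [Ring A] [StarRing A] [Algebra ℂ A] [StarModule ℂ A]

lemma star_mul_self_of_orthogonal {a b c : A} {z : ℂ} (hz : star z * z = 1)
    (hba : star b * a = 0) (hbc : star b * c = 0) :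
    star (star z • a + b + z • c) * (star z • a + b + z • c) =
      star a * a + star b * b + star c * c + z ^ 2 • (star a * c) + star z ^ 2 • (star c * a) := by
  have hab : star a * b = 0 := by simpa using congrArg star hba
  have hcb : star c * b = 0 := by simpa using congrArg star hbc
  simp only [star_add, star_smul, star_star, add_mul, mul_add, smul_mul_assoc, mul_smul_comm,
    hab, hba, hbc, hcb, smul_zero, add_zero, zero_add]
  match_scalars <;> grind

lemma star_mul_deriv_of_orthogonal {a b c : A} {z : ℂ} (hz : star z * z = 1)
    (hba : star b * a = 0) (hbc : star b * c = 0) (hac : star a * c = 0) (hca : star c * a = 0) :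
    star (star z • a + b + z • c) * ((-I * star z) • a + (I * z) • c) =
      I • (star c * c - star a * a) := by
  simp only [star_add, star_smul, star_star, add_mul, mul_add, smul_mul_assoc, mul_smul_comm,
    smul_smul, hac, hba, hbc, hca, smul_zero, add_zero, zero_add, smul_sub]
  match_scalars <;> grind

end UnitCircle

lemma eq_zero_of_forall_add_exp_smul_add_exp_neg_smul {M : Type*} [AddCommGroup M] [Module ℂ M]
    {p x y : M} (h : ∀ θ : ℝ, p + exp (θ * I) • x + exp (-(θ * I)) • y = 0) : x = 0 ∧ y = 0 := by
  -- sampling at `θ = 0, π, π/2` gives an invertible linear system for `p, x, y`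
  have h0 := h 0
  have hπ := h π
  have hπ2 := h (π / 2)
  simp only [ofReal_zero, zero_mul, neg_zero, exp_zero, one_smul, exp_pi_mul_I,
    exp_neg_pi_mul_I] at h0 hπ
  push_cast at hπ2
  rw [← neg_mul, ← neg_div, exp_pi_div_two_mul_I, exp_neg_pi_div_two_mul_I] at hπ2
  have hx : (4 * I) • x = 0 := by
    linear_combination (norm := module)
      (-1 + I) • h0 + (-1 - I) • hπ + (2 : ℂ) • hπ2
  have hy : (4 * I) • y = 0 := by
    linear_combination (norm := module)
      (1 + I) • h0 + (1 - I) • hπ - (2 : ℂ) • hπ2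
  simp_all

lemma star_exp_I_mul (θ : ℝ) : star (exp (I * θ)) = exp (-(I * θ)) := by
  rw [star_def, ← exp_conj, map_mul, conj_I, conj_ofReal, neg_mul]

lemma star_exp_I_mul_mul_self (θ : ℝ) : star (exp (I * θ)) * exp (I * θ) = 1 := by
  rw [star_exp_I_mul, ← exp_add, neg_add_cancel, exp_zero]

theorem stmt_9_general (n : ℕ) (a b c : Matrix (Fin n) (Fin n) ℂ)
    (hba : star b * a = 0) (hbc : star b * c = 0)
    (h : ∀ θ : ℝ,
      star (Complex.exp (-(Complex.I * θ)) • a + b + Complex.exp (Complex.I * θ) • c) *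
        (Complex.exp (-(Complex.I * θ)) • a + b + Complex.exp (Complex.I * θ) • c) = 1) :
    ∀ θ : ℝ,
      star (Complex.exp (-(Complex.I * θ)) • a + b + Complex.exp (Complex.I * θ) • c) *
        ((-Complex.I * Complex.exp (-(Complex.I * θ))) • a +
          (Complex.I * Complex.exp (Complex.I * θ)) • c) =
      Complex.I • (star c * c - star a * a) := by
  have hfourier : ∀ φ : ℝ, (star a * a + star b * b + star c * c - 1) +
      exp (φ * I) • (star a * c) + exp (-(φ * I)) • (star c * a) = 0 := by
    intro φ
    have hφ := h (φ / 2)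
    rw [← star_exp_I_mul, star_mul_self_of_orthogonal (star_exp_I_mul_mul_self _) hba hbc,
      star_exp_I_mul, ← exp_nat_mul, ← exp_nat_mul] at hφ
    have hdouble : ((2 : ℕ) : ℂ) * (I * ((φ / 2 : ℝ) : ℂ)) = φ * I := by push_cast; ring
    rw [hdouble, mul_neg, hdouble] at hφ
    rw [← hφ]
    abel
  obtain ⟨hac, hca⟩ := eq_zero_of_forall_add_exp_smul_add_exp_neg_smul hfourier
  intro θ
  rw [← star_exp_I_mul]
  exact star_mul_deriv_of_orthogonal (star_exp_I_mul_mul_self θ) hba hbc hac hca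

theorem stmt_9 (n : ℕ) (hn : 1 ≤ n) (a b c : Matrix (Fin n) (Fin n) ℂ)
    (hba : star b * a = 0) (hbc : star b * c = 0)
    (h : ∀ θ : ℝ,
      star (Complex.exp (-(Complex.I * θ)) • a + b + Complex.exp (Complex.I * θ) • c) *
        (Complex.exp (-(Complex.I * θ)) • a + b + Complex.exp (Complex.I * θ) • c) = 1) :
    ∀ θ : ℝ,
      star (Complex.exp (-(Complex.I * θ)) • a + b + Complex.exp (Complex.I * θ) • c) *
        ((-Complex.I * Complex.exp (-(Complex.I * θ))) • a +
          (Complex.I * Complex.exp (Complex.I * θ)) • c) =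
      Complex.I • (star c * c - star a * a) :=
  stmt_9_general n a b c hba hbc h
end

section
/- Let F : ℝ → ℂ be continuous and bounded, and let f : ℝ → ℂ be a bounded, twice differentiable function with deriv (deriv f) t = f t − F t for all t ∈ ℝ. Then for every t ∈ ℝ, 2 * f t = ∫_{s ∈ (0,∞)} e^{−s} · F (t + s) ds + ∫_{s ∈ (0,∞)} e^{−s} · F (t − s) ds. -/
/-!
If `f` and `f'' = f - F` are bounded then so is `f'`, by Taylor's formula on `[t, t + 1]`.
The ODE factors as `(d/dt - 1)(d/dt + 1) f = -F`: the bounded functions `g = f' + f` and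
`h = f - f'` solve `g' = g - F` and `h' = F - h`. For the first, `s ↦ e^{-s} g (t + s)` is a
primitive of `-e^{-s} F (t + s)` tending to `0` at infinity, so `g t = ∫₀^∞ e^{-s} F (t + s) ds`;
the second reduces to the first by `t ↦ -t`. Finally `2 f = g + h`.
-/

open MeasureTheory Filter Set Topology

section

variable {E : Type*} [NormedAddCommGroup E] [NormedSpace ℝ E]

theorem norm_deriv_le_of_norm_le_of_norm_deriv_deriv_le {f : ℝ → E} {D K : ℝ}
    (hf : Differentiable ℝ f) (hf' : Differentiable ℝ (deriv f))
    (hfD : ∀ t, ‖f t‖ ≤ D) (hK : ∀ t, ‖deriv (deriv f) t‖ ≤ K) (t : ℝ) :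
    ‖deriv f t‖ ≤ 2 * D + K := by
  set g : ℝ → E := fun s => f s + (t + 1 - s) • deriv f s
  have hg : ∀ s, HasDerivAt g ((t + 1 - s) • deriv (deriv f) s) s := fun s => by
    have := (hf s).hasDerivAt.add
      (((hasDerivAt_id s).const_sub (t + 1)).smul (hf' s).hasDerivAt)
    exact this.congr_deriv (by simp only [id]; module)
  have hremainder : ‖g (t + 1) - g t‖ ≤ K := by
    have := norm_image_sub_le_of_norm_deriv_le_segment' (C := K)
      (fun s _ => (hg s).hasDerivWithinAt) (fun s hs => ?_) (t + 1) ⟨by linarith, le_rfl⟩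
    · simpa using this
    rw [norm_smul, Real.norm_eq_abs, abs_of_nonneg (by linarith [hs.2])]
    exact (mul_le_of_le_one_left (norm_nonneg _) (by linarith [hs.1])).trans (hK s)
  have hderiv : deriv f t = f (t + 1) - f t - (g (t + 1) - g t) := by
    simp [g]
  calc ‖deriv f t‖ ≤ ‖f (t + 1)‖ + ‖f t‖ + ‖g (t + 1) - g t‖ := by
        rw [hderiv]; exact (norm_sub_le _ _).trans (by gcongr; exact norm_sub_le _ _)
    _ ≤ 2 * D + K := by linarith [hfD (t + 1), hfD t]

theorem integrableOn_Ioi_exp_neg_smul {G : ℝ → E} {C : ℝ} (hG : Continuous G)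
    (hGC : ∀ t, ‖G t‖ ≤ C) : IntegrableOn (fun s => Real.exp (-s) • G s) (Ioi 0) :=
  (integrableOn_exp_neg_Ioi 0).smul_bdd C hG.aestronglyMeasurable.restrict
    (ae_of_all _ fun s => hGC s)

variable [CompleteSpace E]

theorem eq_integral_exp_neg_smul_add_of_hasDerivAt_sub {g F : ℝ → E} {B C : ℝ}
    (hFcont : Continuous F) (hFC : ∀ t, ‖F t‖ ≤ C) (hgB : ∀ t, ‖g t‖ ≤ B)
    (hg : ∀ t, HasDerivAt g (g t - F t) t) (t : ℝ) :
    g t = ∫ s in Ioi 0, Real.exp (-s) • F (t + s) := by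
  have hderiv : ∀ s, HasDerivAt (fun s => Real.exp (-s) • g (t + s))
      (-(Real.exp (-s) • F (t + s))) s := fun s => by
    have := (Real.hasDerivAt_exp (-s)).comp s (hasDerivAt_neg s) |>.smul
      ((hg (t + s)).comp_const_add t s)
    exact this.congr_deriv (by simp only [Function.comp_apply]; module)
  have hdecay : Tendsto (fun s => Real.exp (-s) • g (t + s)) atTop (𝓝 0) := by
    refine squeeze_zero_norm (fun s => ?_)
      (by simpa using Real.tendsto_exp_neg_atTop_nhds_zero.mul_const B)
    rw [norm_smul, Real.norm_of_nonneg (Real.exp_pos _).le]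
    exact mul_le_mul_of_nonneg_left (hgB _) (Real.exp_pos _).le
  have hint := (integrableOn_Ioi_exp_neg_smul (hFcont.comp (continuous_const_add t))
    fun s => hFC (t + s)).neg
  have := integral_Ioi_of_hasDerivAt_of_tendsto' (fun s _ => hderiv s) hint hdecay
  rw [integral_neg] at this
  simpa using (neg_eq_iff_eq_neg.mp this).symm

theorem eq_integral_exp_neg_smul_sub_of_hasDerivAt_sub {h F : ℝ → E} {B C : ℝ}
    (hFcont : Continuous F) (hFC : ∀ t, ‖F t‖ ≤ C) (hhB : ∀ t, ‖h t‖ ≤ B)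
    (hh : ∀ t, HasDerivAt h (F t - h t) t) (t : ℝ) :
    h t = ∫ s in Ioi 0, Real.exp (-s) • F (t - s) := by
  have hreflect : ∀ t, HasDerivAt (fun t => h (-t)) (h (-t) - F (-t)) t := fun t => by
    simpa [Function.comp_def] using (hh (-t)).scomp t (hasDerivAt_neg t)
  simpa [sub_eq_neg_add] using eq_integral_exp_neg_smul_add_of_hasDerivAt_sub
    (hFcont.comp continuous_neg) (fun t => hFC (-t)) (fun t => hhB (-t)) hreflect (-t)

end

theorem stmt_10 (F : ℝ → ℂ) (hFcont : Continuous F)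
    (C : ℝ) (hFbd : ∀ t : ℝ, ‖F t‖ ≤ C)
    (f : ℝ → ℂ) (D : ℝ) (hfbd : ∀ t : ℝ, ‖f t‖ ≤ D)
    (hf : Differentiable ℝ f) (hf' : Differentiable ℝ (deriv f))
    (hode : ∀ t : ℝ, deriv (deriv f) t = f t - F t) :
    ∀ t : ℝ, 2 * f t =
      (∫ s in Set.Ioi (0 : ℝ), (Real.exp (-s) : ℂ) * F (t + s)) +
      (∫ s in Set.Ioi (0 : ℝ), (Real.exp (-s) : ℂ) * F (t - s)) := by
  have hf''bd (t : ℝ) : ‖deriv (deriv f) t‖ ≤ D + C := by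
    rw [hode]
    exact (norm_sub_le _ _).trans (add_le_add (hfbd t) (hFbd t))
  have hf'bd := norm_deriv_le_of_norm_le_of_norm_deriv_deriv_le hf hf' hfbd hf''bd
  have hforward (t : ℝ) : HasDerivAt (fun t => deriv f t + f t) (deriv f t + f t - F t) t :=
    ((hf' t).hasDerivAt.add (hf t).hasDerivAt).congr_deriv (by rw [hode]; abel)
  have hbackward (t : ℝ) : HasDerivAt (fun t => f t - deriv f t) (F t - (f t - deriv f t)) t :=
    ((hf t).hasDerivAt.sub (hf' t).hasDerivAt).congr_deriv (by rw [hode]; abel)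
  intro t
  have hplus := eq_integral_exp_neg_smul_add_of_hasDerivAt_sub hFcont hFbd
    (fun t => (norm_add_le _ _).trans (add_le_add (hf'bd t) (hfbd t))) hforward t
  have hminus := eq_integral_exp_neg_smul_sub_of_hasDerivAt_sub hFcont hFbd
    (fun t => (norm_sub_le _ _).trans (add_le_add (hfbd t) (hf'bd t))) hbackward t
  simp only [← Complex.real_smul]
  rw [← hplus, ← hminus]
  ring
end

section
/- Let F : ℝ → ℂ be continuous, let C ≥ 0 satisfy ‖F t‖ ≤ C for all t ∈ ℝ, and let f : ℝ → ℂ be a bounded, twice differentiable function with deriv (deriv f) t = f t − F t for all t ∈ ℝ. Then ‖f t‖ ≤ C for all t ∈ ℝ. -/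
/-!
Pair `f` with a norming functional `ℓ` (Hahn–Banach): `g = ℓ ∘ f - C` is bounded above and
satisfies `g'' ≥ g`, so it suffices to show that such a `g` is nonpositive. The function
`v = g' + g` satisfies `v' ≥ v`, so if `v a > 0` then `v t ≥ v a * exp (t - a)`; as `g` is bounded
above, this forces `g' → ∞`, which is impossible. Hence `g' + g ≤ 0`, and the same argument
applied to `t ↦ g (-t)` gives `g ≤ g'`; adding the two, `g ≤ 0`.
-/

open Real Set

theorem mul_exp_sub_le_of_le_deriv {u : ℝ → ℝ} (hu : Differentiable ℝ u)
    (h : ∀ t, u t ≤ deriv u t) {a t : ℝ} (hat : a ≤ t) : u a * exp (t - a) ≤ u t := by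
  have hderiv : ∀ x, HasDerivAt (fun s => exp (-s) * u s)
      (exp (-x) * (deriv u x - u x)) x := fun x =>
    (((hasDerivAt_neg x).exp).fun_mul (hu x).hasDerivAt).congr_deriv (by ring)
  have hmono : Monotone fun s => exp (-s) * u s :=
    monotone_of_deriv_nonneg (fun x => (hderiv x).differentiableAt) fun x => by
      rw [(hderiv x).deriv]
      exact mul_nonneg (exp_pos _).le (sub_nonneg.2 (h x))
  calc u a * exp (t - a) = exp t * (exp (-a) * u a) := by
        rw [sub_eq_add_neg, exp_add]; ring
    _ ≤ exp t * (exp (-t) * u t) := mul_le_mul_of_nonneg_left (hmono hat) (exp_pos t).le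
    _ = u t := by rw [← mul_assoc, ← exp_add, add_neg_cancel, exp_zero, one_mul]

theorem exists_deriv_lt_of_forall_le {g : ℝ → ℝ} (hg : Differentiable ℝ g) {M : ℝ}
    (hbd : ∀ t, g t ≤ M) {ε : ℝ} (hε : 0 < ε) (T : ℝ) : ∃ t ≥ T, deriv g t < ε := by
  by_contra! hge
  set y := T + (M - g T + 1) / ε
  have hTy : T ≤ y := le_add_of_nonneg_right (div_nonneg (by linarith [hbd T]) hε.le)
  have hgrowth := (convex_Ici T).mul_sub_le_image_sub_of_le_deriv hg.continuous.continuousOn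
    hg.differentiableOn (fun x hx => hge x (interior_subset hx)) T self_mem_Ici y hTy hTy
  have hslope : ε * (y - T) = M - g T + 1 := by simp only [y]; field_simp; ring
  linarith [hbd y]

theorem deriv_add_nonpos_of_le_deriv_deriv {g : ℝ → ℝ} (hg : Differentiable ℝ g)
    (hg' : Differentiable ℝ (deriv g)) {M : ℝ} (hbd : ∀ t, g t ≤ M)
    (hode : ∀ t, g t ≤ deriv (deriv g) t) (a : ℝ) : deriv g a + g a ≤ 0 := by
  by_contra! hpos
  set v := fun t => deriv g t + g t
  have hv : Differentiable ℝ v := hg'.add hg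
  have hv' : ∀ t, v t ≤ deriv v t := fun t => by
    rw [((hg' t).hasDerivAt.fun_add (hg t).hasDerivAt).deriv]
    linarith [hode t]
  obtain ⟨t, hTt, ht⟩ := exists_deriv_lt_of_forall_le hg hbd hpos (a + |M| / v a)
  have hat : a ≤ t := le_trans (le_add_of_nonneg_right (by positivity)) hTt
  have hvt : v a * (t - a + 1) ≤ v t := calc
    v a * (t - a + 1) ≤ v a * exp (t - a) :=
      mul_le_mul_of_nonneg_left (add_one_le_exp _) hpos.le
    _ ≤ v t := mul_exp_sub_le_of_le_deriv hv hv' hat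
  have hM : M ≤ v a * (t - a) := calc
    M ≤ |M| := le_abs_self M
    _ = v a * (|M| / v a) := (mul_div_cancel₀ _ hpos.ne').symm
    _ ≤ v a * (t - a) := mul_le_mul_of_nonneg_left (by linarith) hpos.le
  linarith [hbd t]

theorem nonpos_of_le_deriv_deriv {g : ℝ → ℝ} (hg : Differentiable ℝ g)
    (hg' : Differentiable ℝ (deriv g)) {M : ℝ} (hbd : ∀ t, g t ≤ M)
    (hode : ∀ t, g t ≤ deriv (deriv g) t) (t : ℝ) : g t ≤ 0 := by
  set g₁ := fun s => g (-s)
  have hd : deriv g₁ = fun s => -deriv g (-s) := funext fun s => deriv_comp_neg ..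
  have hdd : ∀ s, deriv (deriv g₁) s = deriv (deriv g) (-s) := fun s => by
    rw [hd, deriv.fun_neg, deriv_comp_neg, neg_neg]
  have hreflected := deriv_add_nonpos_of_le_deriv_deriv (g := g₁) (hg.comp differentiable_neg)
    (by rw [hd]; exact (hg'.comp differentiable_neg).neg) (fun s => hbd (-s))
    (fun s => by rw [hdd]; exact hode (-s)) (-t)
  simp only [hd, g₁, neg_neg] at hreflected
  linarith [deriv_add_nonpos_of_le_deriv_deriv hg hg' hbd hode t]

theorem norm_le_of_deriv_deriv_eq_sub {E : Type*} [NormedAddCommGroup E] [NormedSpace ℝ E]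
    {F f : ℝ → E} {C D : ℝ} (hFbd : ∀ t, ‖F t‖ ≤ C) (hfbd : ∀ t, ‖f t‖ ≤ D)
    (hf : Differentiable ℝ f) (hf' : Differentiable ℝ (deriv f))
    (hode : ∀ t, deriv (deriv f) t = f t - F t) (t : ℝ) : ‖f t‖ ≤ C := by
  obtain ⟨ℓ, hℓ, hℓt⟩ := exists_dual_vector'' ℝ (f t)
  have hℓle : ∀ x, ℓ x ≤ ‖x‖ := fun x =>
    (le_abs_self _).trans ((ℓ.le_of_opNorm_le hℓ x).trans_eq (one_mul _))
  have hderiv : ∀ {h : ℝ → E}, Differentiable ℝ h →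
      deriv (fun s => ℓ (h s)) = fun s => ℓ (deriv h s) :=
    fun hh => funext fun s => (ℓ.hasFDerivAt.comp_hasDerivAt s (hh s).hasDerivAt).deriv
  set g := fun s => ℓ (f s) - C
  have hg : Differentiable ℝ g := (ℓ.differentiable.comp hf).sub_const C
  have hd : deriv g = fun s => ℓ (deriv f s) := by
    funext s; rw [deriv_sub_const, congrFun (hderiv hf)]
  have hg' : Differentiable ℝ (deriv g) := hd ▸ ℓ.differentiable.comp hf'
  have hode' : ∀ s, g s ≤ deriv (deriv g) s := fun s => by
    rw [hd, congrFun (hderiv hf'), hode, map_sub]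
    linarith [hℓle (F s), hFbd s]
  have hbd : ∀ s, g s ≤ D - C := fun s => by linarith [hℓle (f s), hfbd s]
  have hgt := nonpos_of_le_deriv_deriv hg hg' hbd hode' t
  simp only [g, hℓt, RCLike.ofReal_real_eq_id, id] at hgt
  linarith

theorem stmt_11_general (F : ℝ → ℂ)
    (C : ℝ) (hFbd : ∀ t : ℝ, ‖F t‖ ≤ C)
    (f : ℝ → ℂ) (D : ℝ) (hfbd : ∀ t : ℝ, ‖f t‖ ≤ D)
    (hf : Differentiable ℝ f) (hf' : Differentiable ℝ (deriv f))
    (hode : ∀ t : ℝ, deriv (deriv f) t = f t - F t) :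
    ∀ t : ℝ, ‖f t‖ ≤ C :=
  norm_le_of_deriv_deriv_eq_sub hFbd hfbd hf hf' hode

theorem stmt_11 (F : ℝ → ℂ) (hFcont : Continuous F)
    (C : ℝ) (hC : 0 ≤ C) (hFbd : ∀ t : ℝ, ‖F t‖ ≤ C)
    (f : ℝ → ℂ) (D : ℝ) (hfbd : ∀ t : ℝ, ‖f t‖ ≤ D)
    (hf : Differentiable ℝ f) (hf' : Differentiable ℝ (deriv f))
    (hode : ∀ t : ℝ, deriv (deriv f) t = f t - F t) :
    ∀ t : ℝ, ‖f t‖ ≤ C :=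
  stmt_11_general F C hFbd f D hfbd hf hf' hode
end
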